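/- arXiv:2103.08580 — 3 statements merged into one kernel-verified Lean document; each statement's English description precedes it below -/
import Mathlib

section
/- Every simple connected regular matroid of rank at least 1 whose lattice of flats is modular is isomorphic either to the Boolean matroid B_1 (the free matroid on one element) or to the uniform matroid U_{2,3}. -/
/-! Self-contained definitions: matroid minors, rank, flats, the Möbius function of the
lattice of flats, the characteristic polynomial, the defining axioms of the
(inverse) Kazhdan–Lusztig polynomials of a matroid, and basic structural notions
(circuits, connectivity, simplicity, representability, modularity). -/

open Polynomial Matroid

namespace KL

variable {α : Type} [Fintype α]

/-- The deletion of a set `D` from the matroid `M`. -/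
def del (M : Matroid α) (D : Set α) : Matroid α := M ↾ (M.E \ D)

/-- The contraction of the matroid `M` by the set `C`, defined by duality. -/
def con (M : Matroid α) (C : Set α) : Matroid α := (del M✶ C)✶

/-- The rank of a matroid on a finite ground set: the maximal size of an independent set. -/
noncomputable def rk (M : Matroid α) : ℕ := sSup {n | ∃ I, M.Indep I ∧ I.ncard = n}

/-- The rank of a set `X` in a matroid `M`. -/
noncomputable def rkSet (M : Matroid α) (X : Set α) : ℕ := rk (M ↾ X)

/-- A matroid is loopless if every singleton of its ground set is independent. -/
def Loopless (M : Matroid α) : Prop := ∀ e ∈ M.E, M.Indep {e}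

/-- A circuit of a matroid is a minimal dependent set. -/
def Circuit (M : Matroid α) (C : Set α) : Prop :=
  M.Dep C ∧ ∀ D, M.Dep D → D ⊆ C → D = C

/-- A matroid is connected if its ground set is nonempty and every two distinct
elements of the ground set lie in a common circuit. -/
def Connected (M : Matroid α) : Prop :=
  M.E.Nonempty ∧ ∀ e f, e ∈ M.E → f ∈ M.E → e ≠ f → ∃ C, Circuit M C ∧ e ∈ C ∧ f ∈ C

/-- A matroid is simple if it has no loops and no pair of parallel elements; equivalently,
every subset of the ground set with at most two elements is independent. -/
def Simple (M : Matroid α) : Prop :=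
  ∀ I : Set α, I ⊆ M.E → I.ncard ≤ 2 → M.Indep I

/-- A matroid is representable over a field `𝔽` if there is an assignment of vectors to the
elements of the ground set such that independence coincides with linear independence. -/
def Representable (M : Matroid α) (𝔽 : Type) [Field 𝔽] : Prop :=
  ∃ (n : ℕ) (φ : α → (Fin n → 𝔽)), ∀ I : Set α,
    M.Indep I ↔ (I ⊆ M.E ∧ LinearIndependent 𝔽 (fun x : I => φ x))

/-- A matroid is regular if it is representable over every field. -/
def Regular (M : Matroid α) : Prop := ∀ (𝔽 : Type) (_ : Field 𝔽), Representable M 𝔽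

/-- The lattice of flats of `M` is modular: `rk F + rk G = rk (F ∨ G) + rk (F ∧ G)` for all
flats `F, G`, where the join of two flats is the closure of their union and their meet is
their intersection. -/
def ModularFlats (M : Matroid α) : Prop :=
  ∀ F G : Set α, M.IsFlat F → M.IsFlat G →
    rkSet M F + rkSet M G = rkSet M (M.closure (F ∪ G)) + rkSet M (F ∩ G)

open Classical in
/-- The finset of flats of a matroid on a finite ground set. -/
noncomputable def flats (M : Matroid α) : Finset (Set α) :=
  Finset.univ.filter fun F => M.IsFlat F

open Classical in
/-- The Möbius function of the lattice of flats of `M`, as a function on pairs of sets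
(zero when either set is not a flat, and zero on non-ordered pairs of flats). -/
noncomputable def mob (M : Matroid α) (F G : Set α) : ℤ :=
  letI : LocallyFiniteOrder {X : Set α // M.IsFlat X} := Fintype.toLocallyFiniteOrder
  if hF : M.IsFlat F then
    if hG : M.IsFlat G then
      IncidenceAlgebra.mu ℤ (⟨F, hF⟩ : {X : Set α // M.IsFlat X}) ⟨G, hG⟩
    else 0
  else 0

open Classical in
/-- The doubly-indexed Whitney numbers of the first kind:
`w_{i,j} = Σ μ(F,G)` over pairs of flats `F ⊆ G` with `rk F = i` and `rk G = j`. -/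
noncomputable def whitney (M : Matroid α) (i j : ℕ) : ℤ :=
  ∑ F ∈ flats M, ∑ G ∈ flats M,
    if rkSet M F = i ∧ rkSet M G = j ∧ F ⊆ G then mob M F G else 0

/-- The characteristic polynomial `χ_M(t) = Σ_{F ∈ L(M)} μ(∅,F) t^(r - rk F)`
of a (loopless) matroid. -/
noncomputable def chi (M : Matroid α) : Polynomial ℤ :=
  ∑ F ∈ flats M, C (mob M ∅ F) * X ^ (rk M - rkSet M F)

/-- The defining axioms of the Kazhdan–Lusztig polynomial assignment `M ↦ P_M(t)`:
`P_M = 1` in rank `0`; `deg P_M < r/2` for `r > 0`; and the defining recursion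
`t^r P_M(t⁻¹) = Σ_{F ∈ L(M)} χ_{M_F}(t) P_{M^F}(t)`, where `t^r P_M(t⁻¹)` is
formalized as `reflect r P_M`. -/
def IsKLPolynomial (P : Matroid α → Polynomial ℤ) : Prop :=
  (∀ N : Matroid α, Loopless N → rk N = 0 → P N = 1) ∧
  (∀ N : Matroid α, Loopless N → 0 < rk N → 2 * (P N).natDegree < rk N) ∧
  (∀ N : Matroid α, Loopless N →
    (P N).reflect (rk N) = ∑ F ∈ flats N, chi (N ↾ F) * P (con N F))

/-- The defining axioms of the inverse Kazhdan–Lusztig polynomial assignment `M ↦ Q_M(t)`: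
`Q_M = 1` in rank `0`; `deg Q_M < r/2` for `r > 0`; and the defining recursion
`(-1)^r t^r Q_M(t⁻¹) = Σ_{F ∈ L(M)} (-1)^(rk F) Q_{M_F}(t) · t^(r - rk F) χ_{M^F}(t⁻¹)`,
where `t^k p(t⁻¹)` is formalized as `reflect k p`. -/
def IsInvKLPolynomial (Q : Matroid α → Polynomial ℤ) : Prop :=
  (∀ N : Matroid α, Loopless N → rk N = 0 → Q N = 1) ∧
  (∀ N : Matroid α, Loopless N → 0 < rk N → 2 * (Q N).natDegree < rk N) ∧
  (∀ N : Matroid α, Loopless N →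
    (-1 : Polynomial ℤ) ^ (rk N) * (Q N).reflect (rk N) =
      ∑ F ∈ flats N, (-1 : Polynomial ℤ) ^ (rkSet N F) * Q (N ↾ F) *
        (chi (con N F)).reflect (rk N - rkSet N F))

end KL

/-!
Modularity puts a third point on every line of a simple connected matroid: if the circuit `C`
contains `e` and `f`, the flats `cl {e, f}` and `cl (C \ {e, f})` have ranks `2` and `|C| - 2`
while their join `cl C` has rank `|C| - 1`, so they meet, and they can only meet away from `e`
and `f`. Over `GF(2)` the third point of the line through `e` and `f` is `e + f`, so a line has
exactly three points and a regular matroid of rank `2` is `U_{2,3}`. In rank at least `3`, three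
independent points `e, f, g` generate a Fano plane: `e, f, g, e + f + g` form a quadrangle whose
diagonal points `e + f, e + g, f + g` are collinear. In any representation this collinearity
forces the characteristic to be `2`, contradicting representability over `ℚ`.
-/

open Set Submodule

section DiagonalPoints

variable {𝔽 W : Type*} [Field 𝔽] [AddCommGroup W] [Module 𝔽 W]

lemma Submodule.eq_zero_of_smul_mem_of_notMem {U : Submodule 𝔽 W} {c : W} {s : 𝔽} (hc : c ∉ U)
    (h : s • c ∈ U) : s = 0 :=
  by_contra fun hs ↦ hc ((U.smul_mem_iff hs).1 h)

lemma Submodule.mem_span_singleton_of_mem_span_pair_add_smul {U : Submodule 𝔽 W} {c u d : W}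
    {w : 𝔽} (hc : c ∉ U) (hu : u ∈ U) (hd : d ∈ U) (hd' : d ∈ span 𝔽 {c, u + w • c}) :
    d ∈ 𝔽 ∙ u := by
  obtain ⟨s, r, rfl⟩ := mem_span_pair.1 hd'
  have hsr : s + r * w = 0 := by
    refine eq_zero_of_smul_mem_of_notMem hc ?_
    convert U.sub_mem hd (U.smul_mem r hu) using 1
    module
  exact mem_span_singleton.2 ⟨r, by rw [eq_neg_of_add_eq_zero_left hsr]; module⟩

/-- Writing `z = x a + y b + w c`, the diagonal points `d, p, q` are multiples of `x a + y b`,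
`x a + w c` and `y b + w c`, which are linearly dependent only when `2 = 0`. -/
theorem two_eq_zero_of_diagonal_points_collinear {a b c z d p q : W}
    (ha : a ∉ span 𝔽 {b, c}) (hb : b ∉ span 𝔽 {a, c}) (hc : c ∉ span 𝔽 {a, b})
    (hz : z ∈ span 𝔽 {a, b, c}) (hza : z ∉ span 𝔽 {b, c}) (hzb : z ∉ span 𝔽 {a, c})
    (hzc : z ∉ span 𝔽 {a, b})
    (hd : d ∈ span 𝔽 {a, b}) (hd' : d ∈ span 𝔽 {c, z})
    (hp : p ∈ span 𝔽 {a, c}) (hp' : p ∈ span 𝔽 {b, z})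
    (hq : q ∈ span 𝔽 {b, c}) (hq' : q ∈ span 𝔽 {a, z})
    (hdpq : q ∈ span 𝔽 {d, p}) (hq0 : q ≠ 0) : (2 : 𝔽) = 0 := by
  obtain ⟨x, y, w, rfl⟩ := mem_span_triple.1 hz
  have hx : x ≠ 0 := fun h ↦ hza (mem_span_pair.2 ⟨y, w, by rw [h]; module⟩)
  have hy : y ≠ 0 := fun h ↦ hzb (mem_span_pair.2 ⟨x, w, by rw [h]; module⟩)
  have hw : w ≠ 0 := fun h ↦ hzc (mem_span_pair.2 ⟨x, y, by rw [h]; module⟩)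
  obtain ⟨r₁, rfl⟩ := mem_span_singleton.1 <| mem_span_singleton_of_mem_span_pair_add_smul hc
    (mem_span_pair.2 ⟨x, y, rfl⟩) hd hd'
  obtain ⟨r₂, rfl⟩ := mem_span_singleton.1 <| mem_span_singleton_of_mem_span_pair_add_smul hb
    (mem_span_pair.2 ⟨x, w, rfl⟩) hp (by convert hp' using 4; module)
  obtain ⟨r₃, rfl⟩ := mem_span_singleton.1 <| mem_span_singleton_of_mem_span_pair_add_smul ha
    (mem_span_pair.2 ⟨y, w, rfl⟩) hq (by convert hq' using 4; module)
  obtain ⟨m, n, hmn⟩ := mem_span_pair.1 hdpq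
  have hca : (m * r₁ + n * r₂) * x = 0 := eq_zero_of_smul_mem_of_notMem ha <| mem_span_pair.2
    ⟨(r₃ - m * r₁) * y, (r₃ - n * r₂) * w, by linear_combination (norm := module) -hmn⟩
  have hcb : (m * r₁ - r₃) * y = 0 := eq_zero_of_smul_mem_of_notMem hb <| mem_span_pair.2
    ⟨-(m * r₁ + n * r₂) * x, (r₃ - n * r₂) * w, by linear_combination (norm := module) -hmn⟩
  have hcc : (n * r₂ - r₃) * w = 0 := eq_zero_of_smul_mem_of_notMem hc <| mem_span_pair.2
    ⟨-(m * r₁ + n * r₂) * x, (r₃ - m * r₁) * y, by linear_combination (norm := module) -hmn⟩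
  have h2 : 2 * r₃ = 0 := by
    linear_combination (mul_eq_zero.1 hca).resolve_right hx -
      (mul_eq_zero.1 hcb).resolve_right hy - (mul_eq_zero.1 hcc).resolve_right hw
  have hr₃ : r₃ ≠ 0 := by rintro rfl; exact hq0 (zero_smul _ _)
  exact (mul_eq_zero.1 h2).resolve_right hr₃

end DiagonalPoints

lemma Matroid.Indep.notMem_closure_pair {α : Type*} {M : Matroid α} {x y z : α}
    (hI : M.Indep {x, y, z}) (hxy : x ≠ y) (hxz : x ≠ z) : x ∉ M.closure {y, z} := by
  simpa [insert_sdiff_self_of_notMem, hxy, hxz] using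
    hI.notMem_closure_sdiff_of_mem (mem_insert x _)

namespace KL

variable {α : Type}

lemma cast_rk_eq_eRank [Finite α] (M : Matroid α) : (rk M : ℕ∞) = M.eRank := by
  obtain ⟨B, hB⟩ := M.exists_isBase
  have hrk : rk M = B.ncard := by
    refine IsGreatest.csSup_eq ⟨⟨B, hB.indep, rfl⟩, ?_⟩
    rintro n ⟨I, hI, rfl⟩
    have := hI.encard_le_eRank
    rw [← hB.encard_eq_eRank, ← I.toFinite.cast_ncard_eq, ← B.toFinite.cast_ncard_eq] at this
    exact_mod_cast this
  rw [hrk, B.toFinite.cast_ncard_eq, hB.encard_eq_eRank]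

lemma cast_rkSet_eq_eRk [Finite α] (M : Matroid α) (X : Set α) :
    (rkSet M X : ℕ∞) = M.eRk X :=
  cast_rk_eq_eRank (M ↾ X)

section Modular

variable {M : Matroid α}

lemma Circuit.isCircuit {C : Set α} (hC : Circuit M C) : M.IsCircuit C :=
  isCircuit_iff.2 ⟨hC.1, fun D ↦ hC.2 D⟩

lemma Simple.indep_pair (hs : Simple M) {x y : α} (hx : x ∈ M.E) (hy : y ∈ M.E) :
    M.Indep {x, y} :=
  hs _ (pair_subset hx hy) ((ncard_insert_le _ _).trans (by simp))

lemma ModularFlats.eRk_add_eRk [Finite α] (hmod : ModularFlats M) {F G : Set α}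
    (hF : M.IsFlat F) (hG : M.IsFlat G) :
    M.eRk F + M.eRk G = M.eRk (F ∪ G) + M.eRk (F ∩ G) := by
  have := congrArg ((↑) : ℕ → ℕ∞) (hmod F G hF hG)
  push_cast [cast_rkSet_eq_eRk] at this
  rwa [eRk_closure_eq] at this

lemma ModularFlats.exists_mem_closure_pair [Finite α] (hmod : ModularFlats M) (hs : Simple M)
    (hc : Connected M) {e f : α} (he : e ∈ M.E) (hf : f ∈ M.E) (hef : e ≠ f) :
    ∃ g ∈ M.closure {e, f}, g ≠ e ∧ g ≠ f := by
  obtain ⟨C, hC, heC, hfC⟩ := hc.2 e f he hf hef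
  replace hC := hC.isCircuit
  set K := C \ {e, f}
  have hK : M.Indep K :=
    (hC.sdiff_singleton_indep heC).subset (sdiff_subset_sdiff_right (by simp))
  have heK : e ∉ M.closure K := by
    have : M.Indep (insert e K) := (hC.sdiff_singleton_indep hfC).subset
      (insert_subset ⟨heC, hef⟩ (sdiff_subset_sdiff_right (by simp)))
    exact ((hK.insert_indep_iff_of_notMem (by simp [K])).1 this).2
  have hfK : f ∉ M.closure K := by
    have : M.Indep (insert f K) := (hC.sdiff_singleton_indep heC).subset
      (insert_subset ⟨hfC, hef.symm⟩ (sdiff_subset_sdiff_right (by simp)))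
    exact ((hK.insert_indep_iff_of_notMem (by simp [K])).1 this).2
  by_contra! hno
  have hdisj : M.closure {e, f} ∩ M.closure K = ∅ :=
    eq_empty_of_forall_notMem fun g ⟨hg, hgK⟩ ↦ hfK (hno g hg (fun h ↦ heK (h ▸ hgK)) ▸ hgK)
  have hmodEq := hmod.eRk_add_eRk (M.isFlat_closure {e, f}) (M.isFlat_closure K)
  rw [hdisj, eRk_empty, add_zero, eRk_union_closure_left_eq, eRk_union_closure_right_eq,
    union_sdiff_cancel (pair_subset heC hfC), eRk_closure_eq, eRk_closure_eq,
    (hs.indep_pair he hf).eRk_eq_encard, hK.eRk_eq_encard] at hmodEq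
  have hcard := hC.eRk_add_one_eq
  rw [← encard_sdiff_add_encard_of_subset (pair_subset heC hfC), ← hmodEq, add_comm,
    ← K.toFinite.cast_ncard_eq, encard_pair hef] at hcard
  norm_cast at hcard
  omega

end Modular

section Representation

def IsRepresentation (𝔽 : Type*) {W : Type*} [Field 𝔽] [AddCommGroup W] [Module 𝔽 W]
    (M : Matroid α) (φ : α → W) : Prop :=
  ∀ I, M.Indep I ↔ I ⊆ M.E ∧ LinearIndepOn 𝔽 φ I

lemma Regular.exists_isRepresentation {M : Matroid α} (hreg : Regular M) (𝔽 : Type) [Field 𝔽] :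
    ∃ n, ∃ φ : α → Fin n → 𝔽, IsRepresentation 𝔽 M φ :=
  hreg 𝔽 inferInstance

variable {𝔽 W : Type*} [Field 𝔽] [AddCommGroup W] [Module 𝔽 W] {M : Matroid α} {φ : α → W}
  {I : Set α} {x y z : α}

lemma IsRepresentation.mem_closure_iff (hφ : IsRepresentation 𝔽 M φ) (hI : M.Indep I)
    (hx : x ∈ M.E) : x ∈ M.closure I ↔ φ x ∈ span 𝔽 (φ '' I) := by
  rw [hI.mem_closure_iff', ((hφ I).1 hI).2.mem_span_iff, hφ, insert_subset_iff]
  simp [hx, hI.subset_ground]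

lemma IsRepresentation.mem_closure_pair_iff (hφ : IsRepresentation 𝔽 M φ) (hs : Simple M)
    (hx : x ∈ M.E) (hy : y ∈ M.E) (hz : z ∈ M.E) :
    z ∈ M.closure {x, y} ↔ φ z ∈ span 𝔽 {φ x, φ y} := by
  rw [hφ.mem_closure_iff (hs.indep_pair hx hy) hz, image_pair]

lemma IsRepresentation.mem_closure_pair_iff_of_sub_mem (hφ : IsRepresentation 𝔽 M φ)
    (hs : Simple M) {w : α} (hx : x ∈ M.E) (hy : y ∈ M.E) (hz : z ∈ M.E) (hw : w ∈ M.E)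
    (h : φ z - φ w ∈ span 𝔽 {φ x, φ y}) : z ∈ M.closure {x, y} ↔ w ∈ M.closure {x, y} := by
  rw [hφ.mem_closure_pair_iff hs hx hy hz, hφ.mem_closure_pair_iff hs hx hy hw,
    ← sub_add_cancel (φ z) (φ w), Submodule.add_mem_iff_right _ h]

lemma IsRepresentation.injOn (hφ : IsRepresentation 𝔽 M φ) (hs : Simple M) : InjOn φ M.E :=
  fun x hx y hy h ↦ ((hφ _).1 (hs.indep_pair hx hy)).2.injOn (by simp) (by simp) h

lemma IsRepresentation.ne_zero (hφ : IsRepresentation 𝔽 M φ) (hs : Simple M) (hx : x ∈ M.E) :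
    φ x ≠ 0 :=
  ((hφ {x}).1 (by simpa using hs.indep_pair hx hx)).2.ne_zero rfl

end Representation

section Binary

variable {V : Type*} [AddCommGroup V] [Module (ZMod 2) V] {M : Matroid α} {φ : α → V}
  {x y z : α}

lemma IsRepresentation.eq_add_of_mem_closure_pair (hφ : IsRepresentation (ZMod 2) M φ)
    (hs : Simple M) (hx : x ∈ M.E) (hy : y ∈ M.E) (hz : z ∈ M.closure {x, y}) (hzx : z ≠ x)
    (hzy : z ≠ y) : φ z = φ x + φ y := by
  have hzE := M.closure_subset_ground _ hz
  obtain ⟨a, b, hab⟩ := mem_span_pair.1 ((hφ.mem_closure_pair_iff hs hx hy hzE).1 hz)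
  have h01 : ∀ c : ZMod 2, c = 0 ∨ c = 1 := by decide
  rcases h01 a with rfl | rfl <;> rcases h01 b with rfl | rfl <;>
    simp only [zero_smul, one_smul, zero_add, add_zero] at hab
  · exact absurd hab.symm (hφ.ne_zero hs hzE)
  · exact absurd (hφ.injOn hs hy hzE hab) hzy.symm
  · exact absurd (hφ.injOn hs hx hzE hab) hzx.symm
  · exact hab.symm

lemma IsRepresentation.closure_pair_eq (hφ : IsRepresentation (ZMod 2) M φ) (hs : Simple M)
    (hx : x ∈ M.E) (hy : y ∈ M.E) (hz : z ∈ M.closure {x, y}) (hzx : z ≠ x) (hzy : z ≠ y) :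
    M.closure {x, y} = {x, y, z} := by
  have hxy := M.subset_closure _ (pair_subset hx hy)
  refine Subset.antisymm (fun w hw ↦ ?_)
    (insert_subset (hxy (by simp)) (insert_subset (hxy (by simp)) (singleton_subset_iff.2 hz)))
  by_contra! hne
  simp only [mem_insert_iff, mem_singleton_iff, not_or] at hne
  refine hne.2.2 (hφ.injOn hs (M.closure_subset_ground _ hw) (M.closure_subset_ground _ hz) ?_)
  rw [hφ.eq_add_of_mem_closure_pair hs hx hy hw hne.1 hne.2.1,
    hφ.eq_add_of_mem_closure_pair hs hx hy hz hzx hzy]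

end Binary

section FanoConfiguration

/-- `e, f, g, z` is a quadrangle and `d, p, q` are its diagonal points `ef ∩ gz`, `eg ∩ fz`,
`fg ∩ ez`, which are collinear. -/
structure IsFanoConfiguration (M : Matroid α) (e f g z d p q : α) : Prop where
  indep : M.Indep {e, f, g}
  e_notMem : e ∉ M.closure {f, g}
  f_notMem : f ∉ M.closure {e, g}
  g_notMem : g ∉ M.closure {e, f}
  z_mem : z ∈ M.closure {e, f, g}
  z_notMem_fg : z ∉ M.closure {f, g}
  z_notMem_eg : z ∉ M.closure {e, g}
  z_notMem_ef : z ∉ M.closure {e, f}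
  d_mem_ef : d ∈ M.closure {e, f}
  d_mem_gz : d ∈ M.closure {g, z}
  p_mem_eg : p ∈ M.closure {e, g}
  p_mem_fz : p ∈ M.closure {f, z}
  q_mem_fg : q ∈ M.closure {f, g}
  q_mem_ez : q ∈ M.closure {e, z}
  q_mem_dp : q ∈ M.closure {d, p}

variable {M : Matroid α} {e f g z d p q : α}

theorem IsFanoConfiguration.two_eq_zero {𝔽 W : Type*} [Field 𝔽] [AddCommGroup W] [Module 𝔽 W]
    {ψ : α → W} (hF : IsFanoConfiguration M e f g z d p q) (hs : Simple M)
    (hψ : IsRepresentation 𝔽 M ψ) : (2 : 𝔽) = 0 := by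
  have he : e ∈ M.E := hF.indep.subset_ground (by simp)
  have hf : f ∈ M.E := hF.indep.subset_ground (by simp)
  have hg : g ∈ M.E := hF.indep.subset_ground (by simp)
  have hz := M.closure_subset_ground _ hF.z_mem
  have hd := M.closure_subset_ground _ hF.d_mem_ef
  have hp := M.closure_subset_ground _ hF.p_mem_eg
  have hq := M.closure_subset_ground _ hF.q_mem_fg
  have span_iff {x y w : α} (hx : x ∈ M.E) (hy : y ∈ M.E) (hw : w ∈ M.E) :=
    hψ.mem_closure_pair_iff hs hx hy hw
  have hzs : ψ z ∈ span 𝔽 {ψ e, ψ f, ψ g} := by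
    simpa [image_insert_eq] using (hψ.mem_closure_iff hF.indep hz).1 hF.z_mem
  exact two_eq_zero_of_diagonal_points_collinear
    ((span_iff hf hg he).not.1 hF.e_notMem) ((span_iff he hg hf).not.1 hF.f_notMem)
    ((span_iff he hf hg).not.1 hF.g_notMem) hzs
    ((span_iff hf hg hz).not.1 hF.z_notMem_fg) ((span_iff he hg hz).not.1 hF.z_notMem_eg)
    ((span_iff he hf hz).not.1 hF.z_notMem_ef)
    ((span_iff he hf hd).1 hF.d_mem_ef) ((span_iff hg hz hd).1 hF.d_mem_gz)
    ((span_iff he hg hp).1 hF.p_mem_eg) ((span_iff hf hz hp).1 hF.p_mem_fz)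
    ((span_iff hf hg hq).1 hF.q_mem_fg) ((span_iff he hz hq).1 hF.q_mem_ez)
    ((span_iff hd hp hq).1 hF.q_mem_dp) (hψ.ne_zero hs hq)

theorem IsFanoConfiguration.of_binary {V : Type*} [AddCommGroup V] [Module (ZMod 2) V]
    {φ : α → V} (hφ : IsRepresentation (ZMod 2) M φ) (hs : Simple M) (hI : M.Indep {e, f, g})
    (hef : e ≠ f) (heg : e ≠ g) (hfg : f ≠ g) (hz : z ∈ M.E) (hd : d ∈ M.E) (hp : p ∈ M.E)
    (hq : q ∈ M.E) (hφz : φ z = φ e + φ f + φ g) (hφd : φ d = φ e + φ f)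
    (hφp : φ p = φ e + φ g) (hφq : φ q = φ f + φ g) : IsFanoConfiguration M e f g z d p q := by
  have he : e ∈ M.E := hI.subset_ground (by simp)
  have hf : f ∈ M.E := hI.subset_ground (by simp)
  have hg : g ∈ M.E := hI.subset_ground (by simp)
  have he' : e ∉ M.closure {f, g} := hI.notMem_closure_pair hef heg
  have hf' : f ∉ M.closure {e, g} := by
    rw [insert_comm] at hI; exact hI.notMem_closure_pair hef.symm hfg
  have hg' : g ∉ M.closure {e, f} := by
    rw [pair_comm, insert_comm] at hI; exact hI.notMem_closure_pair heg.symm hfg.symm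
  have span_iff {x y w : α} (hx : x ∈ M.E) (hy : y ∈ M.E) (hw : w ∈ M.E) :=
    hφ.mem_closure_pair_iff hs hx hy hw
  have congr_iff {x y w : α} (hx : x ∈ M.E) (hy : y ∈ M.E) (hw : w ∈ M.E) :=
    hφ.mem_closure_pair_iff_of_sub_mem hs hx hy hz hw
  exact
  { indep := hI
    e_notMem := he'
    f_notMem := hf'
    g_notMem := hg'
    z_mem := by
      rw [hφ.mem_closure_iff hI hz, image_insert_eq, image_pair, hφz]
      exact add_mem (add_mem (subset_span (by simp)) (subset_span (by simp)))
        (subset_span (by simp))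
    z_notMem_fg := fun h ↦ he' <|
      (congr_iff hf hg he (mem_span_pair.2 ⟨1, 1, by rw [hφz]; module⟩)).1 h
    z_notMem_eg := fun h ↦ hf' <|
      (congr_iff he hg hf (mem_span_pair.2 ⟨1, 1, by rw [hφz]; module⟩)).1 h
    z_notMem_ef := fun h ↦ hg' <|
      (congr_iff he hf hg (mem_span_pair.2 ⟨1, 1, by rw [hφz]; module⟩)).1 h
    d_mem_ef := (span_iff he hf hd).2 (mem_span_pair.2 ⟨1, 1, by rw [hφd]; module⟩)
    d_mem_gz := (span_iff hg hz hd).2 (mem_span_pair.2 ⟨-1, 1, by rw [hφz, hφd]; module⟩)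
    p_mem_eg := (span_iff he hg hp).2 (mem_span_pair.2 ⟨1, 1, by rw [hφp]; module⟩)
    p_mem_fz := (span_iff hf hz hp).2 (mem_span_pair.2 ⟨-1, 1, by rw [hφz, hφp]; module⟩)
    q_mem_fg := (span_iff hf hg hq).2 (mem_span_pair.2 ⟨1, 1, by rw [hφq]; module⟩)
    q_mem_ez := (span_iff he hz hq).2 (mem_span_pair.2 ⟨-1, 1, by rw [hφz, hφq]; module⟩)
    -- the only place where `1 + 1 = 0` is used
    q_mem_dp := (span_iff hd hp hq).2
      (mem_span_pair.2 ⟨1, 1, by rw [hφd, hφp, hφq]; match_scalars <;> decide⟩) }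

theorem exists_isFanoConfiguration [Finite α] {V : Type*} [AddCommGroup V] [Module (ZMod 2) V]
    {φ : α → V} (hs : Simple M) (hc : Connected M) (hmod : ModularFlats M)
    (hφ : IsRepresentation (ZMod 2) M φ) (hI : M.Indep {e, f, g}) (hef : e ≠ f) (heg : e ≠ g)
    (hfg : f ≠ g) : ∃ z d p q, IsFanoConfiguration M e f g z d p q := by
  have he : e ∈ M.E := hI.subset_ground (by simp)
  have hf : f ∈ M.E := hI.subset_ground (by simp)
  have hg : g ∈ M.E := hI.subset_ground (by simp)
  have hg' : g ∉ M.closure {e, f} := by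
    rw [pair_comm, insert_comm] at hI; exact hI.notMem_closure_pair heg.symm hfg.symm
  obtain ⟨d, hd, hde, hdf⟩ := hmod.exists_mem_closure_pair hs hc he hf hef
  have hdE := M.closure_subset_ground _ hd
  obtain ⟨z, hz, hzg, hzd⟩ :=
    hmod.exists_mem_closure_pair hs hc hg hdE (fun h ↦ hg' (h ▸ hd))
  obtain ⟨p, hp, hpe, hpg⟩ := hmod.exists_mem_closure_pair hs hc he hg heg
  obtain ⟨q, hq, hqf, hqg⟩ := hmod.exists_mem_closure_pair hs hc hf hg hfg
  have hφd := hφ.eq_add_of_mem_closure_pair hs he hf hd hde hdf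
  refine ⟨z, d, p, q, .of_binary hφ hs hI hef heg hfg (M.closure_subset_ground _ hz) hdE
    (M.closure_subset_ground _ hp) (M.closure_subset_ground _ hq) ?_ hφd
    (hφ.eq_add_of_mem_closure_pair hs he hg hp hpe hpg)
    (hφ.eq_add_of_mem_closure_pair hs hf hg hq hqf hqg)⟩
  rw [hφ.eq_add_of_mem_closure_pair hs hg hdE hz hzg hzd, hφd]
  abel

end FanoConfiguration

section Classification

lemma Simple.eq_freeOn_of_eRank_eq_one {M : Matroid α} (hs : Simple M) (h : M.eRank = 1) :
    M.E.ncard = 1 ∧ M = freeOn M.E := by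
  obtain ⟨B, hB⟩ := M.exists_isBase
  obtain ⟨e, rfl⟩ := encard_eq_one.1 (hB.encard_eq_eRank.trans h)
  have he : e ∈ M.E := hB.subset_ground rfl
  have hE : M.E = {e} := by
    refine eq_singleton_iff_unique_mem.2 ⟨he, fun x hx ↦ by_contra fun hxe ↦ ?_⟩
    have := (hs.indep_pair hx he).encard_le_eRank
    rw [encard_pair hxe, h] at this
    exact absurd this (by norm_num)
  exact ⟨by simp [hE], eq_freeOn_iff.2 ⟨rfl, hE ▸ hB.indep⟩⟩

variable [Finite α] {M : Matroid α}

lemma Regular.eq_U23_of_eRank_eq_two (hreg : Regular M) (hs : Simple M) (hc : Connected M)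
    (hmod : ModularFlats M) (h : M.eRank = 2) :
    M.E.ncard = 3 ∧ ∀ I, M.Indep I ↔ I ⊆ M.E ∧ I.ncard ≤ 2 := by
  obtain ⟨B, hB⟩ := M.exists_isBase
  obtain ⟨e, f, hef, rfl⟩ := encard_eq_two.1 (hB.encard_eq_eRank.trans h)
  have he : e ∈ M.E := hB.subset_ground (by simp)
  have hf : f ∈ M.E := hB.subset_ground (by simp)
  obtain ⟨g, hg, hge, hgf⟩ := hmod.exists_mem_closure_pair hs hc he hf hef
  obtain ⟨_, φ, hφ⟩ := hreg.exists_isRepresentation (ZMod 2)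
  have hE : M.E = {e, f, g} := by rw [← hB.closure_eq, hφ.closure_pair_eq hs he hf hg hge hgf]
  refine ⟨by rw [hE, ncard_eq_three]; exact ⟨e, f, g, hef, hge.symm, hgf.symm, rfl⟩,
    fun I ↦ ⟨fun hI ↦ ⟨hI.subset_ground, ?_⟩, fun hI ↦ hs I hI.1 hI.2⟩⟩
  have := hI.encard_le_eRank
  rw [h, ← I.toFinite.cast_ncard_eq] at this
  exact_mod_cast this

lemma Regular.eRank_lt_three (hreg : Regular M) (hs : Simple M) (hc : Connected M)
    (hmod : ModularFlats M) : M.eRank < 3 := by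
  by_contra! h3
  obtain ⟨B, hB⟩ := M.exists_isBase
  obtain ⟨T, hTB, hT⟩ := exists_subset_encard_eq (hB.encard_eq_eRank ▸ h3)
  obtain ⟨e, f, g, hef, heg, hfg, rfl⟩ := encard_eq_three.1 hT
  obtain ⟨_, φ, hφ⟩ := hreg.exists_isRepresentation (ZMod 2)
  obtain ⟨z, d, p, q, hF⟩ :=
    exists_isFanoConfiguration hs hc hmod hφ (hB.indep.subset hTB) hef heg hfg
  obtain ⟨_, ψ, hψ⟩ := hreg.exists_isRepresentation ℚ
  exact two_ne_zero (hF.two_eq_zero hs hψ)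

end Classification

/-- Every simple connected regular matroid of rank at least `1` whose lattice
of flats is modular is isomorphic either to the Boolean matroid `B₁` (the free matroid on
one element) or to the uniform matroid `U_{2,3}` (the rank-2 matroid on a 3-element ground
set in which the independent sets are exactly the subsets of the ground set with at most 2
elements). -/
theorem modular_regular_classification {α : Type} [Fintype α] (M : Matroid α)
    (hs : Simple M) (hc : Connected M) (hreg : Regular M) (hrk : 1 ≤ rk M)
    (hmod : ModularFlats M) :
    (M.E.ncard = 1 ∧ M = Matroid.freeOn M.E) ∨
    (M.E.ncard = 3 ∧ ∀ I : Set α, M.Indep I ↔ I ⊆ M.E ∧ I.ncard ≤ 2) := by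
  have hlt : rk M < 3 := by
    have := hreg.eRank_lt_three hs hc hmod
    rwa [← cast_rk_eq_eRank, Nat.cast_lt_ofNat] at this
  obtain h | h : rk M = 1 ∨ rk M = 2 := by omega
  · exact Or.inl (hs.eq_freeOn_of_eRank_eq_one (by rw [← cast_rk_eq_eRank, h, Nat.cast_one]))
  · exact Or.inr (hreg.eq_U23_of_eRank_eq_two hs hc hmod
      (by rw [← cast_rk_eq_eRank, h, Nat.cast_ofNat]))

end KL
end

section
/- Let L be a finite geometric lattice (atomistic and semimodular) of rank r that is modular. Then the Whitney numbers of the second kind of L are symmetric: for all 0 ≤ k ≤ r, the number of elements of L of rank k equals the number of elements of rank r − k. -/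
open Finset

namespace WhitneySym

variable {L : Type} [Fintype L] [Lattice L]

open scoped Classical

lemma card_lt_of_lt {c b : L} (h : c < b) :
    (univ.filter fun x => x ≤ c).card < (univ.filter fun x => x ≤ b).card := by
  apply Finset.card_lt_card
  constructor
  · intro x hx
    simp only [mem_filter, mem_univ, true_and] at hx ⊢
    exact hx.trans h.le
  · intro hsub
    have := hsub (by simp : b ∈ univ.filter fun x => x ≤ b)
    simp only [mem_filter, mem_univ, true_and] at this
    exact absurd (lt_of_le_of_lt this h) (lt_irrefl _)

lemma card_lt_of_gt {c b : L} (h : b < c) :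
    (univ.filter fun x => c ≤ x).card < (univ.filter fun x => b ≤ x).card := by
  apply Finset.card_lt_card
  constructor
  · intro x hx
    simp only [mem_filter, mem_univ, true_and] at hx ⊢
    exact h.le.trans hx
  · intro hsub
    have := hsub (by simp : b ∈ univ.filter fun x => b ≤ x)
    simp only [mem_filter, mem_univ, true_and] at this
    exact absurd (lt_of_lt_of_le h this) (lt_irrefl _)

noncomputable def mu (a : L) (b : L) : ℤ :=
  if a = b then 1
  else if a ≤ b then
    - ∑ c ∈ (univ.filter fun c => a ≤ c ∧ c < b).attach,
        mu a c.1
  else 0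
termination_by (univ.filter fun x => x ≤ b).card
decreasing_by
  have hc := c.2
  simp only [mem_filter, mem_univ, true_and] at hc
  exact card_lt_of_lt hc.2

noncomputable def mu' (a : L) (b : L) : ℤ :=
  if a = b then 1
  else if a ≤ b then
    - ∑ c ∈ (univ.filter fun c => a < c ∧ c ≤ b).attach,
        mu' c.1 b
  else 0
termination_by (univ.filter fun x => a ≤ x).card
decreasing_by
  have hc := c.2
  simp only [mem_filter, mem_univ, true_and] at hc
  exact card_lt_of_gt hc.1

lemma mu_self (a : L) : mu a a = 1 := by rw [mu]; simp

lemma mu'_self (a : L) : mu' a a = 1 := by rw [mu']; simp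

lemma mu_of_not_le {a b : L} (h : ¬ a ≤ b) : mu a b = 0 := by
  rw [mu]; rw [if_neg, if_neg h]; rintro rfl; exact h le_rfl

lemma mu'_of_not_le {a b : L} (h : ¬ a ≤ b) : mu' a b = 0 := by
  rw [mu']; rw [if_neg, if_neg h]; rintro rfl; exact h le_rfl

lemma mu_rec {a b : L} (hne : a ≠ b) (hle : a ≤ b) :
    mu a b = - ∑ c ∈ univ.filter fun c => a ≤ c ∧ c < b, mu a c := by
  rw [mu, if_neg hne, if_pos hle]
  congr 1
  rw [Finset.sum_attach _ (fun c => mu a c)]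

lemma mu'_rec {a b : L} (hne : a ≠ b) (hle : a ≤ b) :
    mu' a b = - ∑ c ∈ univ.filter fun c => a < c ∧ c ≤ b, mu' c b := by
  rw [mu', if_neg hne, if_pos hle]
  congr 1
  rw [Finset.sum_attach _ (fun c => mu' c b)]

lemma mu_sum {a b : L} (hle : a ≤ b) :
    ∑ c ∈ univ.filter fun c => a ≤ c ∧ c ≤ b, mu a c = if a = b then 1 else 0 := by
  by_cases hab : a = b
  · subst hab
    rw [if_pos rfl]
    have : (univ.filter fun c => a ≤ c ∧ c ≤ a) = {a} := by
      ext c; simp [le_antisymm_iff, and_comm]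
    rw [this, Finset.sum_singleton, mu_self]
  · rw [if_neg hab]
    have hsplit : (univ.filter fun c => a ≤ c ∧ c ≤ b)
        = insert b (univ.filter fun c => a ≤ c ∧ c < b) := by
      ext c
      simp only [mem_filter, mem_univ, true_and, mem_insert]
      constructor
      · rintro ⟨h1, h2⟩
        rcases eq_or_lt_of_le h2 with h | h
        · exact Or.inl h
        · exact Or.inr ⟨h1, h⟩
      · rintro (rfl | ⟨h1, h2⟩)
        · exact ⟨hle, le_rfl⟩
        · exact ⟨h1, h2.le⟩
    rw [hsplit, Finset.sum_insert (by simp), mu_rec hab hle]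
    ring

lemma mu'_sum {a b : L} (hle : a ≤ b) :
    ∑ c ∈ univ.filter fun c => a ≤ c ∧ c ≤ b, mu' c b = if a = b then 1 else 0 := by
  by_cases hab : a = b
  · subst hab
    rw [if_pos rfl]
    have : (univ.filter fun c => a ≤ c ∧ c ≤ a) = {a} := by
      ext c; simp [le_antisymm_iff, and_comm]
    rw [this, Finset.sum_singleton, mu'_self]
  · rw [if_neg hab]
    have hsplit : (univ.filter fun c => a ≤ c ∧ c ≤ b)
        = insert a (univ.filter fun c => a < c ∧ c ≤ b) := by
      ext c
      simp only [mem_filter, mem_univ, true_and, mem_insert]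
      constructor
      · rintro ⟨h1, h2⟩
        rcases eq_or_lt_of_le h1 with h | h
        · exact Or.inl h.symm
        · exact Or.inr ⟨h, h2⟩
      · rintro (rfl | ⟨h1, h2⟩)
        · exact ⟨le_rfl, hle⟩
        · exact ⟨h1.le, h2⟩
    rw [hsplit, Finset.sum_insert (by simp), mu'_rec hab hle]
    ring

open scoped Classical

lemma exists_cover_between {a b : L} (h : a < b) : ∃ c, a ⋖ c ∧ c ≤ b := by
  have hne : (univ.filter fun x => a < x ∧ x ≤ b).Nonempty :=
    ⟨b, by simp [h]⟩
  obtain ⟨c, hcm⟩ := Finset.exists_minimal (s := univ.filter fun x => a < x ∧ x ≤ b) hne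
  have hc := hcm.prop
  have hmin : ∀ x ∈ univ.filter (fun x => a < x ∧ x ≤ b), ¬ x < c :=
    fun x hx hlt => hlt.not_ge (hcm.2 hx hlt.le)
  simp only [mem_filter, mem_univ, true_and] at hc
  refine ⟨c, ⟨hc.1, fun d hd1 hd2 => ?_⟩, hc.2⟩
  refine hmin d ?_ hd2
  simp only [mem_filter, mem_univ, true_and]
  exact ⟨hd1, hd2.le.trans hc.2⟩

variable {rk : L → ℕ}

lemma rk_lt_of_lt (hcov : ∀ a b : L, a ⋖ b → rk b = rk a + 1) :
    ∀ a b : L, a < b → rk a < rk b := by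
  suffices H : ∀ n, ∀ a b : L, a < b →
      (univ.filter fun x => a < x ∧ x ≤ b).card = n → rk a < rk b by
    intro a b h; exact H _ a b h rfl
  intro n
  induction n using Nat.strong_induction_on with
  | _ n IH =>
    intro a b hab hcard
    obtain ⟨c, hcov', hcb⟩ := exists_cover_between hab
    have hrkc : rk c = rk a + 1 := hcov a c hcov'
    rcases eq_or_lt_of_le hcb with rfl | hlt
    · omega
    · have hsub : (univ.filter fun x => c < x ∧ x ≤ b)
          ⊂ (univ.filter fun x => a < x ∧ x ≤ b) := by
        constructor
        · intro x hx
          simp only [mem_filter, mem_univ, true_and] at hx ⊢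
          exact ⟨hcov'.1.trans hx.1, hx.2⟩
        · intro hsub'
          have hc' : c ∈ univ.filter fun x => a < x ∧ x ≤ b := by
            simp only [mem_filter, mem_univ, true_and]
            exact ⟨hcov'.1, hcb⟩
          have := hsub' hc'
          simp only [mem_filter, mem_univ, true_and] at this
          exact absurd this.1 (lt_irrefl c)
      have := IH _ (hcard ▸ Finset.card_lt_card hsub) c b hlt rfl
      omega

lemma rk_mono (hcov : ∀ a b : L, a ⋖ b → rk b = rk a + 1) {a b : L} (h : a ≤ b) :
    rk a ≤ rk b := by
  rcases eq_or_lt_of_le h with rfl | h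
  · exact le_rfl
  · exact (rk_lt_of_lt hcov a b h).le

lemma eq_of_le_of_rk_le (hcov : ∀ a b : L, a ⋖ b → rk b = rk a + 1) {a b : L}
    (h : a ≤ b) (h2 : rk b ≤ rk a) : a = b := by
  rcases eq_or_lt_of_le h with rfl | h
  · rfl
  · exact absurd (rk_lt_of_lt hcov a b h) (by omega)

lemma covBy_of_rk (hcov : ∀ a b : L, a ⋖ b → rk b = rk a + 1) {a b : L}
    (h : a < b) (h2 : rk b = rk a + 1) : a ⋖ b := by
  refine ⟨h, fun d hd1 hd2 => ?_⟩
  have h3 := rk_lt_of_lt hcov a d hd1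
  have h4 := rk_lt_of_lt hcov d b hd2
  omega

lemma rk_sup_cover (hcov : ∀ a b : L, a ⋖ b → rk b = rk a + 1)
    (semimodular : ∀ a b : L, rk (a ⊔ b) + rk (a ⊓ b) ≤ rk a + rk b)
    {a c q : L} (hac : a ≤ c) (hq : a ⋖ q) (hqc : ¬ q ≤ c) :
    rk (c ⊔ q) = rk c + 1 := by
  have hmeet : c ⊓ q = a := by
    have h1 : a ≤ c ⊓ q := le_inf hac hq.1.le
    have h2 : c ⊓ q ≤ q := inf_le_right
    rcases eq_or_lt_of_le h2 with h | h
    · exact absurd (h ▸ inf_le_left) hqc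
    · rcases eq_or_lt_of_le h1 with h' | h'
      · exact h'.symm
      · exact absurd h (hq.2 h')
  have hrkq : rk q = rk a + 1 := hcov a q hq
  have hsm := semimodular c q
  rw [hmeet] at hsm
  have hlt : c < c ⊔ q := by
    rcases eq_or_lt_of_le (le_sup_left : c ≤ c ⊔ q) with h | h
    · exact absurd (h ▸ le_sup_right) hqc
    · exact h
  have h5 := rk_lt_of_lt hcov c (c ⊔ q) hlt
  have h6 := rk_mono hcov (le_inf hac hq.1.le : a ≤ c ⊓ q)
  omega


section Geo

variable [BoundedOrder L] {rk : L → ℕ}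

lemma le_of_interval_atoms (hcov : ∀ a b : L, a ⋖ b → rk b = rk a + 1)
    (hbot : rk ⊥ = 0)
    (semimodular : ∀ a b : L, rk (a ⊔ b) + rk (a ⊓ b) ≤ rk a + rk b)
    (atomistic : ∀ a : L, ∃ s : Finset L, (∀ x ∈ s, IsAtom x) ∧ a = s.sup id)
    {a b m : L} (ham : a ≤ m) (hab : a ≤ b)
    (h : ∀ q, a ⋖ q → q ≤ b → q ≤ m) : b ≤ m := by
  obtain ⟨s, hs, hb⟩ := atomistic b
  rw [hb]
  apply Finset.sup_le
  intro t ht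
  show t ≤ m
  have htb : t ≤ b := by rw [hb]; exact Finset.le_sup (f := id) ht
  by_cases hta : t ≤ a
  · exact hta.trans ham
  · have hatom : IsAtom t := hs t ht
    have hbc : (⊥ : L) ⋖ t := hatom.bot_covBy
    have hbc' : (⊥ : L) ⋖ t := hbc
    -- rank of ⊥ cover: rk t = rk ⊥ + 1
    have hrk : rk (a ⊔ t) = rk a + 1 := by
      have := rk_sup_cover hcov semimodular (bot_le : (⊥:L) ≤ a) hbc hta
      simpa using this
    have hlt : a < a ⊔ t := by
      rcases eq_or_lt_of_le (le_sup_left : a ≤ a ⊔ t) with h' | h'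
      · exact absurd (h' ▸ le_sup_right) hta
      · exact h'
    have hcv : a ⋖ a ⊔ t := covBy_of_rk hcov hlt hrk
    have : a ⊔ t ≤ m := h _ hcv (sup_le hab htb)
    exact le_sup_right.trans this

lemma exists_join_compl (hcov : ∀ a b : L, a ⋖ b → rk b = rk a + 1)
    (hbot : rk ⊥ = 0)
    (semimodular : ∀ a b : L, rk (a ⊔ b) + rk (a ⊓ b) ≤ rk a + rk b)
    (atomistic : ∀ a : L, ∃ s : Finset L, (∀ x ∈ s, IsAtom x) ∧ a = s.sup id)
    {a b p : L} (hab : a < b) (hp : a ⋖ p) (hpb : p ≤ b) :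
    ∃ c, a ≤ c ∧ c < b ∧ c ⊔ p = b := by
  have hS : (univ.filter fun c => a ≤ c ∧ c ≤ b ∧ ¬ p ≤ c).Nonempty := by
    refine ⟨a, ?_⟩
    simp only [mem_filter, mem_univ, true_and]
    exact ⟨le_rfl, hab.le, fun hpa => absurd (lt_of_lt_of_le hp.1 hpa) (lt_irrefl a)⟩
  obtain ⟨c, hcm⟩ :=
    Finset.exists_maximal (s := univ.filter fun c => a ≤ c ∧ c ≤ b ∧ ¬ p ≤ c) hS
  have hc := hcm.prop
  have hmax : ∀ x ∈ univ.filter (fun c => a ≤ c ∧ c ≤ b ∧ ¬ p ≤ c), ¬ c < x :=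
    fun x hx hlt => hlt.not_ge (hcm.2 hx hlt.le)
  simp only [mem_filter, mem_univ, true_and] at hc
  obtain ⟨hac, hcb, hpc⟩ := hc
  have hcpb : c ⊔ p ≤ b := sup_le hcb hpb
  have hkey : c ⊔ p = b := by
    by_contra hne
    have hnb : ¬ b ≤ c ⊔ p := fun hble => hne (le_antisymm hcpb hble)
    have : ¬ ∀ q, a ⋖ q → q ≤ b → q ≤ c ⊔ p := by
      intro hall
      exact hnb (le_of_interval_atoms hcov hbot semimodular atomistic
        (hac.trans le_sup_left) hab.le hall)
    push_neg at this
    obtain ⟨q, hq, hqb, hqm⟩ := this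
    have hqc : ¬ q ≤ c := fun h' => hqm (h'.trans le_sup_left)
    have hpq : p ≤ c ⊔ q := by
      by_contra hpq
      have hmem : c ⊔ q ∈ univ.filter fun x => a ≤ x ∧ x ≤ b ∧ ¬ p ≤ x := by
        simp only [mem_filter, mem_univ, true_and]
        exact ⟨hac.trans le_sup_left, sup_le hcb hqb, hpq⟩
      have hlt : c < c ⊔ q := by
        rcases eq_or_lt_of_le (le_sup_left : c ≤ c ⊔ q) with h' | h'
        · exact absurd (h' ▸ le_sup_right) hqc
        · exact h'
      exact hmax _ hmem hlt
    have hrkq : rk (c ⊔ q) = rk c + 1 := rk_sup_cover hcov semimodular hac hq hqc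
    have hle1 : c ⊔ p ≤ c ⊔ q := sup_le le_sup_left hpq
    have hlt2 : c < c ⊔ p := by
      rcases eq_or_lt_of_le (le_sup_left : c ≤ c ⊔ p) with h' | h'
      · exact absurd (h' ▸ le_sup_right) hpc
      · exact h'
    have h3 := rk_lt_of_lt hcov c (c ⊔ p) hlt2
    have heq : c ⊔ p = c ⊔ q := eq_of_le_of_rk_le hcov hle1 (by omega)
    exact hqm (heq ▸ le_sup_right)
  exact ⟨c, hac, lt_of_le_of_ne hcb (fun h' => hpc (h' ▸ hpb)), hkey⟩

end Geo


section Weisner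

lemma weisner_interval {a b p : L} (hap : a < p) (hpb : p ≤ b)
    (e : L) (hpe : p ≤ e) (heb : e ≤ b) :
    ∑ d ∈ univ.filter (fun d => p ≤ d ∧ d ≤ e),
      (∑ c ∈ univ.filter (fun c => a ≤ c ∧ c ≤ b ∧ c ⊔ p = d), mu a c) = 0 := by
  have hae : a ≤ e := hap.le.trans hpe
  have step : ∀ d ∈ univ.filter (fun d => p ≤ d ∧ d ≤ e),
      (univ.filter (fun c => a ≤ c ∧ c ≤ b ∧ c ⊔ p = d))
      = (univ.filter (fun c => a ≤ c ∧ c ≤ e)).filter (fun c => c ⊔ p = d) := by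
    intro d hd
    simp only [mem_filter, mem_univ, true_and] at hd
    rw [Finset.filter_filter]
    ext c
    simp only [mem_filter, mem_univ, true_and]
    constructor
    · rintro ⟨h1, h2, h3⟩
      exact ⟨⟨h1, (le_sup_left.trans h3.le).trans hd.2⟩, h3⟩
    · rintro ⟨⟨h1, h2⟩, h3⟩
      exact ⟨h1, h2.trans heb, h3⟩
  have hmaps : ∀ c ∈ univ.filter (fun c => a ≤ c ∧ c ≤ e),
      c ⊔ p ∈ univ.filter (fun d => p ≤ d ∧ d ≤ e) := by
    intro c hc
    simp only [mem_filter, mem_univ, true_and] at hc ⊢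
    exact ⟨le_sup_right, sup_le hc.2 hpe⟩
  have hfib := Finset.sum_fiberwise_of_maps_to hmaps (fun c => mu a c)
  calc ∑ d ∈ univ.filter (fun d => p ≤ d ∧ d ≤ e),
      (∑ c ∈ univ.filter (fun c => a ≤ c ∧ c ≤ b ∧ c ⊔ p = d), mu a c)
      = ∑ d ∈ univ.filter (fun d => p ≤ d ∧ d ≤ e),
        (∑ c ∈ (univ.filter (fun c => a ≤ c ∧ c ≤ e)).filter (fun c => c ⊔ p = d),
          mu a c) := Finset.sum_congr rfl (fun d hd => by rw [step d hd])
    _ = ∑ c ∈ univ.filter (fun c => a ≤ c ∧ c ≤ e), mu a c := hfib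
    _ = 0 := by
        rw [mu_sum hae, if_neg (fun (h : a = e) => absurd (h ▸ hpe) (not_le_of_gt hap))]

lemma weisner_zero {a b p : L} (hap : a < p) (hpb : p ≤ b) :
    ∀ e, p ≤ e → e ≤ b →
      ∑ c ∈ univ.filter (fun c => a ≤ c ∧ c ≤ b ∧ c ⊔ p = e), mu a c = 0 := by
  suffices H : ∀ n, ∀ e, p ≤ e → e ≤ b →
      (univ.filter fun x => p ≤ x ∧ x ≤ e).card = n →
      ∑ c ∈ univ.filter (fun c => a ≤ c ∧ c ≤ b ∧ c ⊔ p = e), mu a c = 0 by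
    intro e h1 h2; exact H _ e h1 h2 rfl
  intro n
  induction n using Nat.strong_induction_on with
  | _ n IH =>
    intro e hpe heb hcard
    have hsplit : (univ.filter fun d => p ≤ d ∧ d ≤ e)
        = insert e (univ.filter fun d => p ≤ d ∧ d < e) := by
      ext d
      simp only [mem_filter, mem_univ, true_and, mem_insert]
      constructor
      · rintro ⟨h1, h2⟩
        rcases eq_or_lt_of_le h2 with h | h
        · exact Or.inl h
        · exact Or.inr ⟨h1, h⟩
      · rintro (rfl | ⟨h1, h2⟩)
        · exact ⟨hpe, le_rfl⟩
        · exact ⟨h1, h2.le⟩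
    have hW := weisner_interval hap hpb e hpe heb
    rw [hsplit, Finset.sum_insert (by simp)] at hW
    have hrest : ∑ d ∈ univ.filter (fun d => p ≤ d ∧ d < e),
        (∑ c ∈ univ.filter (fun c => a ≤ c ∧ c ≤ b ∧ c ⊔ p = d), mu a c) = 0 := by
      apply Finset.sum_eq_zero
      intro d hd
      simp only [mem_filter, mem_univ, true_and] at hd
      have hsub : (univ.filter fun x => p ≤ x ∧ x ≤ d)
          ⊂ (univ.filter fun x => p ≤ x ∧ x ≤ e) := by
        constructor
        · intro x hx
          simp only [mem_filter, mem_univ, true_and] at hx ⊢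
          exact ⟨hx.1, hx.2.trans hd.2.le⟩
        · intro hsub'
          have he' : e ∈ univ.filter fun x => p ≤ x ∧ x ≤ e := by
            simp only [mem_filter, mem_univ, true_and]; exact ⟨hpe, le_rfl⟩
          have := hsub' he'
          simp only [mem_filter, mem_univ, true_and] at this
          exact absurd this.2 (not_le_of_gt hd.2)
      exact IH _ (hcard ▸ Finset.card_lt_card hsub) d hd.1 (hd.2.le.trans heb) rfl
    rw [hrest] at hW
    linarith [hW]

end Weisner


section Sign

variable [BoundedOrder L] {rk : L → ℕ}

lemma mu_sign (hcov : ∀ a b : L, a ⋖ b → rk b = rk a + 1)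
    (hbot : rk ⊥ = 0)
    (semimodular : ∀ a b : L, rk (a ⊔ b) + rk (a ⊓ b) ≤ rk a + rk b)
    (atomistic : ∀ a : L, ∃ s : Finset L, (∀ x ∈ s, IsAtom x) ∧ a = s.sup id) :
    ∀ a b : L, a ≤ b → ∀ n : ℕ, rk b = rk a + n → 0 < (-1 : ℤ)^n * mu a b := by
  suffices H : ∀ N, ∀ a b : L, a ≤ b →
      (univ.filter fun x => a ≤ x ∧ x ≤ b).card = N →
      ∀ n : ℕ, rk b = rk a + n → 0 < (-1 : ℤ)^n * mu a b by
    intro a b hab n hn; exact H _ a b hab rfl n hn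
  intro N
  induction N using Nat.strong_induction_on with
  | _ N IH =>
    intro a b hab hcard n hn
    rcases eq_or_lt_of_le hab with rfl | hlt
    · have : n = 0 := by omega
      subst this
      simp [mu_self]
    · -- pick an atom p of [a,b]
      obtain ⟨p, hp, hpb⟩ := exists_cover_between hlt
      have hrkp : rk p = rk a + 1 := hcov a p hp
      have hrkpb : rk p ≤ rk b := rk_mono hcov hpb
      obtain ⟨m, rfl⟩ : ∃ m, n = m + 1 := ⟨n - 1, by omega⟩
      -- Weisner
      have hW := weisner_zero hp.1 hpb b hpb le_rfl
      have hbS : b ∈ univ.filter (fun c => a ≤ c ∧ c ≤ b ∧ c ⊔ p = b) := by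
        simp only [mem_filter, mem_univ, true_and]
        exact ⟨hab, le_rfl, sup_eq_left.mpr hpb⟩
      rw [← Finset.add_sum_erase _ _ hbS] at hW
      have hmuab : mu a b
          = - ∑ c ∈ (univ.filter (fun c => a ≤ c ∧ c ≤ b ∧ c ⊔ p = b)).erase b,
              mu a c := by linarith [hW]
      -- each c in the erased set has rk c = rk a + m
      have hrkc : ∀ c ∈ (univ.filter (fun c => a ≤ c ∧ c ≤ b ∧ c ⊔ p = b)).erase b,
          a ≤ c ∧ c < b ∧ rk c = rk a + m := by
        intro c hcmem
        obtain ⟨hcne, hcmem⟩ := Finset.mem_erase.mp hcmem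
        simp only [mem_filter, mem_univ, true_and] at hcmem
        obtain ⟨hac, hcb, hcp⟩ := hcmem
        have hclt : c < b := lt_of_le_of_ne hcb hcne
        have hmeet : c ⊓ p = a := by
          have h1 : a ≤ c ⊓ p := le_inf hac hp.1.le
          have h2 : c ⊓ p ≤ p := inf_le_right
          rcases eq_or_lt_of_le h2 with h | h
          · exfalso
            have hpc : p ≤ c := h ▸ inf_le_left
            rw [sup_eq_left.mpr hpc] at hcp
            exact hcne hcp
          · rcases eq_or_lt_of_le h1 with h' | h'
            · exact h'.symm
            · exact absurd h (hp.2 h')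
        have hsm := semimodular c p
        rw [hcp, hmeet] at hsm
        have hcltb := rk_lt_of_lt hcov c b hclt
        exact ⟨hac, hclt, by omega⟩
      -- nonemptiness
      obtain ⟨c₀, hc₀1, hc₀2, hc₀3⟩ :=
        exists_join_compl hcov hbot semimodular atomistic hlt hp hpb
      have hc₀mem : c₀ ∈ (univ.filter (fun c => a ≤ c ∧ c ≤ b ∧ c ⊔ p = b)).erase b := by
        rw [Finset.mem_erase]
        refine ⟨ne_of_lt hc₀2, ?_⟩
        simp only [mem_filter, mem_univ, true_and]
        exact ⟨hc₀1, hc₀2.le, hc₀3⟩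
      -- sum of positives
      have hpos : 0 < ∑ c ∈ (univ.filter (fun c => a ≤ c ∧ c ≤ b ∧ c ⊔ p = b)).erase b,
          (-1 : ℤ)^m * mu a c := by
        apply Finset.sum_pos
        · intro c hcmem
          obtain ⟨hac, hclt, hrk⟩ := hrkc c hcmem
          have hsub : (univ.filter fun x => a ≤ x ∧ x ≤ c)
              ⊂ (univ.filter fun x => a ≤ x ∧ x ≤ b) := by
            constructor
            · intro x hx
              simp only [mem_filter, mem_univ, true_and] at hx ⊢
              exact ⟨hx.1, hx.2.trans hclt.le⟩
            · intro hsub'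
              have hb' : b ∈ univ.filter fun x => a ≤ x ∧ x ≤ b := by
                simp only [mem_filter, mem_univ, true_and]; exact ⟨hab, le_rfl⟩
              have := hsub' hb'
              simp only [mem_filter, mem_univ, true_and] at this
              exact absurd this.2 (not_le_of_gt hclt)
          exact IH _ (hcard ▸ Finset.card_lt_card hsub) a c hac rfl m hrk
        · exact ⟨c₀, hc₀mem⟩
      rw [← Finset.mul_sum] at hpos
      have : (-1 : ℤ)^(m+1) * mu a b = (-1:ℤ)^m
          * ∑ c ∈ (univ.filter (fun c => a ≤ c ∧ c ≤ b ∧ c ⊔ p = b)).erase b, mu a c := by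
        rw [hmuab]; ring
      rw [this]
      exact hpos

lemma mu_ne_zero (hcov : ∀ a b : L, a ⋖ b → rk b = rk a + 1)
    (hbot : rk ⊥ = 0)
    (semimodular : ∀ a b : L, rk (a ⊔ b) + rk (a ⊓ b) ≤ rk a + rk b)
    (atomistic : ∀ a : L, ∃ s : Finset L, (∀ x ∈ s, IsAtom x) ∧ a = s.sup id)
    {a b : L} (hab : a ≤ b) : mu a b ≠ 0 := by
  have h := mu_sign hcov hbot semimodular atomistic a b hab (rk b - rk a)
    (by have := rk_mono hcov hab; omega)
  intro h0
  rw [h0, mul_zero] at h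
  exact lt_irrefl 0 h

end Sign


section Matrices

variable (L)

noncomputable def Zmat : Matrix L L ℚ := fun a b => if a ≤ b then 1 else 0
noncomputable def Mmat : Matrix L L ℚ := fun a b => (mu a b : ℚ)
noncomputable def M'mat : Matrix L L ℚ := fun a b => (mu' a b : ℚ)

variable {L}

lemma Mmat_mul_Zmat : Mmat L * Zmat L = 1 := by
  ext a b
  rw [Matrix.mul_apply, Matrix.one_apply]
  have hsum : ∑ c, Mmat L a c * Zmat L c b
      = ∑ c ∈ univ.filter (fun c => a ≤ c ∧ c ≤ b), (mu a c : ℚ) := by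
    rw [Finset.sum_filter]
    apply Finset.sum_congr rfl
    intro c _
    by_cases h1 : a ≤ c <;> by_cases h2 : c ≤ b <;>
      simp [Mmat, Zmat, h1, h2, mu_of_not_le]
  rw [hsum]
  by_cases hab : a ≤ b
  · rw [show ∑ c ∈ univ.filter (fun c => a ≤ c ∧ c ≤ b), (mu a c : ℚ)
        = ((∑ c ∈ univ.filter (fun c => a ≤ c ∧ c ≤ b), mu a c : ℤ) : ℚ) by push_cast; rfl]
    rw [mu_sum hab]
    by_cases h : a = b <;> simp [h]
  · have : (univ.filter fun c => a ≤ c ∧ c ≤ b) = ∅ := by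
      ext c; simp only [mem_filter, mem_univ, true_and, Finset.notMem_empty, iff_false]
      rintro ⟨h1, h2⟩; exact hab (h1.trans h2)
    rw [this, Finset.sum_empty, if_neg (fun (h : a = b) => hab (h ▸ le_rfl))]

lemma Zmat_mul_M'mat : Zmat L * M'mat L = 1 := by
  ext a b
  rw [Matrix.mul_apply, Matrix.one_apply]
  have hsum : ∑ c, Zmat L a c * M'mat L c b
      = ∑ c ∈ univ.filter (fun c => a ≤ c ∧ c ≤ b), (mu' c b : ℚ) := by
    rw [Finset.sum_filter]
    apply Finset.sum_congr rfl
    intro c _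
    by_cases h1 : a ≤ c <;> by_cases h2 : c ≤ b <;>
      simp [Mmat, M'mat, Zmat, h1, h2, mu'_of_not_le]
  rw [hsum]
  by_cases hab : a ≤ b
  · rw [show ∑ c ∈ univ.filter (fun c => a ≤ c ∧ c ≤ b), (mu' c b : ℚ)
        = ((∑ c ∈ univ.filter (fun c => a ≤ c ∧ c ≤ b), mu' c b : ℤ) : ℚ) by push_cast; rfl]
    rw [mu'_sum hab]
    by_cases h : a = b <;> simp [h]
  · have : (univ.filter fun c => a ≤ c ∧ c ≤ b) = ∅ := by
      ext c; simp only [mem_filter, mem_univ, true_and, Finset.notMem_empty, iff_false]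
      rintro ⟨h1, h2⟩; exact hab (h1.trans h2)
    rw [this, Finset.sum_empty, if_neg (fun (h : a = b) => hab (h ▸ le_rfl))]

lemma Mmat_eq_M'mat : Mmat L = M'mat L := by
  calc Mmat L = Mmat L * 1 := by rw [Matrix.mul_one]
    _ = Mmat L * (Zmat L * M'mat L) := by rw [Zmat_mul_M'mat]
    _ = (Mmat L * Zmat L) * M'mat L := by rw [Matrix.mul_assoc]
    _ = M'mat L := by rw [Mmat_mul_Zmat, Matrix.one_mul]

lemma mu'_eq_mu (a b : L) : mu' a b = mu a b := by
  have := congrFun (congrFun (Mmat_eq_M'mat (L := L)) a) b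
  simp only [Mmat, M'mat] at this
  exact_mod_cast this.symm

lemma mulVec_injective_of_left_inverse {A B : Matrix L L ℚ} (h : A * B = 1) :
    Function.Injective B.mulVec := by
  intro v w hvw
  have h2 : A.mulVec (B.mulVec v) = A.mulVec (B.mulVec w) := by rw [hvw]
  rwa [Matrix.mulVec_mulVec, Matrix.mulVec_mulVec, h, Matrix.one_mulVec,
    Matrix.one_mulVec] at h2

end Matrices


section EF

open Matrix in
lemma _root_.WhitneySym.dummy_open : True := trivial

open Matrix

variable [BoundedOrder L]

variable (L)

noncomputable def Emat : Matrix L L ℚ := fun x y => if x ⊔ y = ⊤ then 1 else 0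
noncomputable def Fmat : Matrix L L ℚ := fun x y => if x ⊓ y = ⊥ then 1 else 0
noncomputable def Dtop : Matrix L L ℚ := Matrix.diagonal (fun z => (mu' z (⊤:L) : ℚ))
noncomputable def Dbot : Matrix L L ℚ := Matrix.diagonal (fun w => (mu (⊥:L) w : ℚ))

variable {L}

lemma Emat_eq : Emat L = Zmat L * (Dtop L * (Zmat L)ᵀ) := by
  ext x y
  rw [Matrix.mul_apply]
  have hterm : ∀ z, Zmat L x z * (Dtop L * (Zmat L)ᵀ) z y
      = (if x ≤ z ∧ y ≤ z then (mu' z (⊤:L) : ℚ) else 0) := by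
    intro z
    rw [Dtop, Matrix.diagonal_mul]
    by_cases h1 : x ≤ z <;> by_cases h2 : y ≤ z <;>
      simp [Zmat, Matrix.transpose_apply, h1, h2]
  rw [Finset.sum_congr rfl (fun z _ => hterm z)]
  rw [← Finset.sum_filter]
  have hset : (univ.filter fun z => x ≤ z ∧ y ≤ z)
      = univ.filter fun z => x ⊔ y ≤ z ∧ z ≤ ⊤ := by
    ext z; simp [sup_le_iff]
  rw [hset]
  rw [show ∑ z ∈ univ.filter (fun z => x ⊔ y ≤ z ∧ z ≤ ⊤), (mu' z (⊤:L) : ℚ)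
      = ((∑ z ∈ univ.filter (fun z => x ⊔ y ≤ z ∧ z ≤ ⊤), mu' z (⊤:L) : ℤ) : ℚ) by
    push_cast; rfl]
  rw [mu'_sum (le_top : x ⊔ y ≤ ⊤)]
  rw [Emat]
  by_cases h : x ⊔ y = ⊤ <;> simp [h, Ne.symm]

lemma Fmat_eq : Fmat L = (Zmat L)ᵀ * (Dbot L * Zmat L) := by
  ext x y
  rw [Matrix.mul_apply]
  have hterm : ∀ w, (Zmat L)ᵀ x w * (Dbot L * Zmat L) w y
      = (if w ≤ x ∧ w ≤ y then (mu (⊥:L) w : ℚ) else 0) := by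
    intro w
    rw [Dbot, Matrix.diagonal_mul]
    by_cases h1 : w ≤ x <;> by_cases h2 : w ≤ y <;>
      simp [Zmat, Matrix.transpose_apply, h1, h2]
  rw [Finset.sum_congr rfl (fun w _ => hterm w)]
  rw [← Finset.sum_filter]
  have hset : (univ.filter fun w => w ≤ x ∧ w ≤ y)
      = univ.filter fun w => (⊥:L) ≤ w ∧ w ≤ x ⊓ y := by
    ext w; simp [le_inf_iff]
  rw [hset]
  rw [show ∑ w ∈ univ.filter (fun w => (⊥:L) ≤ w ∧ w ≤ x ⊓ y), (mu (⊥:L) w : ℚ)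
      = ((∑ w ∈ univ.filter (fun w => (⊥:L) ≤ w ∧ w ≤ x ⊓ y), mu (⊥:L) w : ℤ) : ℚ) by
    push_cast; rfl]
  rw [mu_sum (bot_le : (⊥:L) ≤ x ⊓ y)]
  rw [Fmat]
  by_cases h : x ⊓ y = ⊥ <;> simp [h, Ne.symm]

variable {rk : L → ℕ}

lemma Emat_mulVec_injective (hcov : ∀ a b : L, a ⋖ b → rk b = rk a + 1)
    (hbot : rk ⊥ = 0)
    (semimodular : ∀ a b : L, rk (a ⊔ b) + rk (a ⊓ b) ≤ rk a + rk b)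
    (atomistic : ∀ a : L, ∃ s : Finset L, (∀ x ∈ s, IsAtom x) ∧ a = s.sup id) :
    Function.Injective (Emat L).mulVec := by
  have hdz : ∀ z : L, (mu' z (⊤:L) : ℚ) ≠ 0 := by
    intro z
    rw [mu'_eq_mu]
    exact_mod_cast mu_ne_zero hcov hbot semimodular atomistic (le_top : z ≤ ⊤)
  set Dinv : Matrix L L ℚ := Matrix.diagonal (fun z => ((mu' z (⊤:L) : ℚ))⁻¹) with hDinv
  have h2 : Dinv * Dtop L = 1 := by
    rw [hDinv, Dtop, Matrix.diagonal_mul_diagonal, ← Matrix.diagonal_one]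
    have hfun : (fun z => ((mu' z (⊤:L) : ℚ))⁻¹ * (mu' z (⊤:L) : ℚ)) = fun _ => (1:ℚ) :=
      funext fun z => inv_mul_cancel₀ (hdz z)
    rw [hfun]
  have h3 : (M'mat L)ᵀ * (Zmat L)ᵀ = 1 := by
    have := congrArg Matrix.transpose (Zmat_mul_M'mat (L := L))
    rwa [Matrix.transpose_mul, Matrix.transpose_one] at this
  apply mulVec_injective_of_left_inverse
    (A := (M'mat L)ᵀ * (Dinv * Mmat L))
  rw [Emat_eq]
  simp only [← Matrix.mul_assoc]
  calc (M'mat L)ᵀ * Dinv * Mmat L * Zmat L * Dtop L * (Zmat L)ᵀ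
      = (M'mat L)ᵀ * Dinv * (Mmat L * Zmat L) * Dtop L * (Zmat L)ᵀ := by
        simp only [Matrix.mul_assoc]
    _ = (M'mat L)ᵀ * (Dinv * Dtop L) * (Zmat L)ᵀ := by
        rw [Mmat_mul_Zmat, Matrix.mul_one]
        simp only [Matrix.mul_assoc]
    _ = (M'mat L)ᵀ * (Zmat L)ᵀ := by rw [h2, Matrix.mul_one]
    _ = 1 := h3

lemma Fmat_mulVec_injective (hcov : ∀ a b : L, a ⋖ b → rk b = rk a + 1)
    (hbot : rk ⊥ = 0)
    (semimodular : ∀ a b : L, rk (a ⊔ b) + rk (a ⊓ b) ≤ rk a + rk b)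
    (atomistic : ∀ a : L, ∃ s : Finset L, (∀ x ∈ s, IsAtom x) ∧ a = s.sup id) :
    Function.Injective (Fmat L).mulVec := by
  have hdz : ∀ w : L, (mu (⊥:L) w : ℚ) ≠ 0 := by
    intro w
    exact_mod_cast mu_ne_zero hcov hbot semimodular atomistic (bot_le : (⊥:L) ≤ w)
  set Dinv : Matrix L L ℚ := Matrix.diagonal (fun w => ((mu (⊥:L) w : ℚ))⁻¹) with hDinv
  have h2 : Dinv * Dbot L = 1 := by
    rw [hDinv, Dbot, Matrix.diagonal_mul_diagonal, ← Matrix.diagonal_one]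
    have hfun : (fun w => ((mu (⊥:L) w : ℚ))⁻¹ * (mu (⊥:L) w : ℚ)) = fun _ => (1:ℚ) :=
      funext fun w => inv_mul_cancel₀ (hdz w)
    rw [hfun]
  have h3 : (M'mat L)ᵀ * (Zmat L)ᵀ = 1 := by
    have := congrArg Matrix.transpose (Zmat_mul_M'mat (L := L))
    rwa [Matrix.transpose_mul, Matrix.transpose_one] at this
  apply mulVec_injective_of_left_inverse
    (A := Mmat L * (Dinv * (M'mat L)ᵀ))
  rw [Fmat_eq]
  simp only [← Matrix.mul_assoc]
  calc Mmat L * Dinv * (M'mat L)ᵀ * (Zmat L)ᵀ * Dbot L * Zmat L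
      = Mmat L * Dinv * ((M'mat L)ᵀ * (Zmat L)ᵀ) * Dbot L * Zmat L := by
        simp only [Matrix.mul_assoc]
    _ = Mmat L * (Dinv * Dbot L) * Zmat L := by
        rw [h3, Matrix.mul_one]
        simp only [Matrix.mul_assoc]
    _ = Mmat L * Zmat L := by rw [h2, Matrix.mul_one]
    _ = 1 := Mmat_mul_Zmat

end EF


section Count

lemma card_le_of_pattern {G : Matrix L L ℚ} (hinj : Function.Injective G.mulVec)
    (P Q : L → Prop) (hPQ : ∀ x y, P x → G y x ≠ 0 → Q y) :
    Nat.card {x // P x} ≤ Nat.card {y // Q y} := by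
  rw [Nat.card_eq_fintype_card, Nat.card_eq_fintype_card]
  set S : Matrix {y // Q y} {x // P x} ℚ :=
    G.submatrix (Subtype.val) (Subtype.val) with hS
  have hinj' : Function.Injective S.mulVecLin := by
    rw [injective_iff_map_eq_zero]
    intro c hc
    set v : L → ℚ := fun x => if h : P x then c ⟨x, h⟩ else 0 with hv
    have hsub : ∀ y : L, ∑ x : L, G y x * v x = ∑ x : {x // P x}, G y x.1 * c x := by
      intro y
      have h1 : ∑ x ∈ univ.filter P, G y x * v x = ∑ x : {x // P x}, G y x.1 * c x := by
        rw [Finset.sum_subtype (p := P) (univ.filter P) (by simp) (fun x => G y x * v x)]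
        apply Finset.sum_congr rfl
        intro x _
        rw [hv]
        simp [x.2]
      rw [← h1]
      apply (Finset.sum_subset (Finset.filter_subset _ _) _).symm
      intro x _ hx
      simp only [mem_filter, mem_univ, true_and] at hx
      rw [hv]
      simp [hx]
    have hGv : G.mulVec v = 0 := by
      funext y
      show ∑ x : L, G y x * v x = 0
      rw [hsub y]
      by_cases hQ : Q y
      · have : (S.mulVecLin c) ⟨y, hQ⟩ = 0 := by rw [hc]; rfl
        rw [← this]
        simp [Matrix.mulVecLin_apply, Matrix.mulVec, dotProduct, hS,
          Matrix.submatrix_apply]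
      · apply Finset.sum_eq_zero
        intro x _
        by_cases hGx : G y x.1 = 0
        · rw [hGx, zero_mul]
        · exact absurd (hPQ x.1 y x.2 hGx) hQ
    have hv0 : v = 0 := by
      apply hinj
      rw [hGv, Matrix.mulVec_zero]
    funext x
    have := congrFun hv0 x.1
    rw [hv] at this
    simpa [x.2] using this
  have h1 : Fintype.card {x // P x}
      = Module.finrank ℚ ({x // P x} → ℚ) := (Module.finrank_fintype_fun_eq_card ℚ).symm
  have h2 : Fintype.card {y // Q y}
      = Module.finrank ℚ ({y // Q y} → ℚ) := (Module.finrank_fintype_fun_eq_card ℚ).symm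
  rw [h1, h2]
  exact LinearMap.finrank_le_finrank_of_injective hinj'

end Count

end WhitneySym

open WhitneySym
open scoped Classical

/-- Let `L` be a finite geometric lattice (atomistic and semimodular) of rank
`r` that is modular. Then the Whitney numbers of the second kind of `L` are symmetric: for
all `0 ≤ k ≤ r`, the number of elements of `L` of rank `k` equals the number of elements of
rank `r - k`. Here `rk` is the rank function of `L`: it vanishes on `⊥` and increases by
one along covers. -/
theorem whitney_numbers_symmetric {L : Type} [Fintype L] [Lattice L] [BoundedOrder L]
    (rk : L → ℕ) (hbot : rk ⊥ = 0) (hcov : ∀ a b : L, a ⋖ b → rk b = rk a + 1)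
    (atomistic : ∀ a : L, ∃ s : Finset L, (∀ x ∈ s, IsAtom x) ∧ a = s.sup id)
    (semimodular : ∀ a b : L, rk (a ⊔ b) + rk (a ⊓ b) ≤ rk a + rk b)
    (modular : ∀ a b : L, rk (a ⊔ b) + rk (a ⊓ b) = rk a + rk b)
    (k : ℕ) (hk : k ≤ rk ⊤) :
    Nat.card {x : L // rk x = k} = Nat.card {x : L // rk x = rk ⊤ - k} := by
  have hEinj := Emat_mulVec_injective hcov hbot semimodular atomistic
  have hFinj := Fmat_mulVec_injective hcov hbot semimodular atomistic
  set r := rk ⊤ with hr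
  -- level sums coincide
  have hA : ∀ j : ℕ, Nat.card {x : L // rk x ≤ j}
      = Nat.card {y : L // r ≤ rk y + j} := by
    intro j
    apply le_antisymm
    · apply card_le_of_pattern hEinj
      intro x y hx hG
      have hxy : y ⊔ x = ⊤ := by
        by_contra h
        exact hG (by simp [Emat, h])
      have hm := modular y x
      rw [hxy] at hm
      have := rk_mono hcov (bot_le : (⊥:L) ≤ y ⊓ x)
      omega
    · apply card_le_of_pattern hFinj
      intro x y hx hG
      have hxy : y ⊓ x = ⊥ := by
        by_contra h
        exact hG (by simp [Fmat, h])
      have hm := modular y x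
      rw [hxy, hbot] at hm
      have := rk_mono hcov (le_top : y ⊔ x ≤ ⊤)
      omega
  rcases Nat.eq_zero_or_pos k with rfl | hkpos
  · -- k = 0 : both sides are 1
    have h0 : ∀ x : L, rk x = 0 ↔ x = ⊥ := by
      intro x
      constructor
      · intro h
        exact (eq_of_le_of_rk_le hcov (bot_le : (⊥:L) ≤ x) (by omega)).symm
      · rintro rfl; exact hbot
    have hrr : ∀ x : L, rk x = r - 0 ↔ x = ⊤ := by
      intro x
      simp only [Nat.sub_zero]
      constructor
      · intro h
        exact eq_of_le_of_rk_le hcov (le_top : x ≤ ⊤) (by omega)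
      · rintro rfl; rfl
    rw [Nat.card_eq_fintype_card, Nat.card_eq_fintype_card,
      Fintype.card_congr (Equiv.subtypeEquivRight h0),
      Fintype.card_congr (Equiv.subtypeEquivRight hrr),
      Fintype.card_subtype_eq, Fintype.card_subtype_eq]
  · obtain ⟨m, rfl⟩ : ∃ m, k = m + 1 := ⟨k - 1, by omega⟩
    have hrkle : ∀ y : L, rk y ≤ r := fun y => rk_mono hcov (le_top : y ≤ ⊤)
    have count1 : Nat.card {x : L // rk x ≤ m+1}
        = Nat.card {x : L // rk x = m+1} + Nat.card {x : L // rk x ≤ m} := by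
      rw [Nat.card_eq_fintype_card, Nat.card_eq_fintype_card, Nat.card_eq_fintype_card]
      rw [Fintype.card_subtype, Fintype.card_subtype, Fintype.card_subtype]
      rw [← Finset.card_union_of_disjoint]
      · congr 1
        ext x
        simp only [mem_filter, mem_univ, true_and, Finset.mem_union]
        omega
      · rw [Finset.disjoint_left]
        intro x h1 h2
        simp only [mem_filter, mem_univ, true_and] at h1 h2
        omega
    have count2 : Nat.card {y : L // r ≤ rk y + (m+1)}
        = Nat.card {y : L // rk y = r - (m+1)}
          + Nat.card {y : L // r ≤ rk y + m} := by
      rw [Nat.card_eq_fintype_card, Nat.card_eq_fintype_card, Nat.card_eq_fintype_card]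
      rw [Fintype.card_subtype, Fintype.card_subtype, Fintype.card_subtype]
      rw [← Finset.card_union_of_disjoint]
      · congr 1
        ext y
        have := hrkle y
        simp only [mem_filter, mem_univ, true_and, Finset.mem_union]
        omega
      · rw [Finset.disjoint_left]
        intro y h1 h2
        have := hrkle y
        simp only [mem_filter, mem_univ, true_and] at h1 h2
        omega
    have e1 := hA (m+1)
    have e2 := hA m
    omega
end

section
/- Let M be a simple connected matroid of rank r ≥ 3 on a finite ground set whose lattice of flats is modular, and let G be a rank-3 flat of M. Then the restriction M_G is a connected modular matroid of rank 3 in which every rank-2 flat contains at least 3 elements (i.e., M_G is a rank-3 connected projective geometry). -/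
/-! Self-contained definitions: matroid minors, rank, flats, the Möbius function of the
lattice of flats, the characteristic polynomial, the defining axioms of the
(inverse) Kazhdan–Lusztig polynomials of a matroid, and basic structural notions
(circuits, connectivity, simplicity, representability, modularity). -/

open Polynomial Matroid

/-! A line `{a, b}` with only two points contradicts modularity: a circuit `C` through `a` and
`b` gives the flat `cl (C \ {a, b})`, which misses the line, yet the two flats together span only
`rk C = |C| - 1`, less than the sum `2 + |C \ {a, b}|` of their ranks. Flats and ranks of `M_G`
are those of `M` below `G`, so modularity and the three-point lines pass to `M_G`; in a simple
matroid, a third point `c` on the line through `e` and `f` makes `{c, e, f}` a circuit, whence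
connectivity. -/

namespace Matroid

open Set

variable {α : Type*} {M : Matroid α} {C F G : Set α} {a b : α}

lemma IsCircuit.notMem_closure_sdiff_pair (hC : M.IsCircuit C) (ha : a ∈ C) (hb : b ∈ C)
    (hab : a ≠ b) : a ∉ M.closure (C \ {a, b}) := by
  have := (hC.sdiff_singleton_indep hb).notMem_closure_sdiff_of_mem
    (show a ∈ C \ {b} from ⟨ha, hab⟩)
  rwa [sdiff_sdiff, singleton_union, pair_comm] at this

lemma IsFlat.isFlat_restrict_iff (hG : M.IsFlat G) :
    (M ↾ G).IsFlat F ↔ M.IsFlat F ∧ F ⊆ G := by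
  simp only [isFlat_iff_closure_eq]
  constructor
  · intro hF
    have hFG : F ⊆ G := hF ▸ (M ↾ G).closure_subset_ground F
    rw [restrict_closure_eq _ hFG hG.subset_ground] at hF
    have hclG : M.closure F ⊆ G := hG.closure ▸ M.closure_subset_closure hFG
    exact ⟨(inter_eq_left.2 hclG).symm.trans hF, hFG⟩
  · rintro ⟨hF, hFG⟩
    rw [restrict_closure_eq _ hFG hG.subset_ground, hF, inter_eq_left.2 hFG]

end Matroid

namespace KL

open Set

variable {α : Type} {M : Matroid α} {C F G I X : Set α}

lemma circuit_iff_isCircuit : Circuit M C ↔ M.IsCircuit C :=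
  isCircuit_iff.symm

lemma rkSet_restrict (M : Matroid α) (hXG : X ⊆ G) : rkSet (M ↾ G) X = rkSet M X := by
  rw [rkSet, rkSet, M.restrict_restrict_eq hXG]

lemma Simple.restrict (hs : Simple M) (hG : G ⊆ M.E) : Simple (M ↾ G) :=
  fun I hIG hI2 => ⟨hs I (hIG.trans hG) hI2, hIG⟩

lemma ModularFlats.restrict (hmod : ModularFlats M) (hG : M.IsFlat G) :
    ModularFlats (M ↾ G) := by
  intro F₁ F₂ hF₁ hF₂
  rw [hG.isFlat_restrict_iff] at hF₁ hF₂
  have hunion : F₁ ∪ F₂ ⊆ G := union_subset hF₁.2 hF₂.2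
  have hclG : M.closure (F₁ ∪ F₂) ⊆ G := hG.closure ▸ M.closure_subset_closure hunion
  rw [restrict_closure_eq _ hunion hG.subset_ground, inter_eq_left.2 hclG,
    rkSet_restrict M hF₁.2, rkSet_restrict M hF₂.2, rkSet_restrict M hclG,
    rkSet_restrict M (inter_subset_left.trans hF₁.2)]
  exact hmod F₁ F₂ hF₁.1 hF₂.1

variable [Fintype α]

lemma rk_eq_eRank (M : Matroid α) : (rk M : ℕ∞) = M.eRank := by
  obtain ⟨B, hB⟩ := M.exists_isBase
  have hB_greatest : IsGreatest {n | ∃ I, M.Indep I ∧ I.ncard = n} B.ncard := by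
    refine ⟨⟨B, hB.indep, rfl⟩, ?_⟩
    rintro _ ⟨I, hI, rfl⟩
    rw [← Nat.cast_le (α := ℕ∞), I.toFinite.cast_ncard_eq, B.toFinite.cast_ncard_eq,
      hB.encard_eq_eRank]
    exact hI.encard_le_eRank
  rw [rk, hB_greatest.csSup_eq, B.toFinite.cast_ncard_eq, hB.encard_eq_eRank]

lemma rkSet_eq_eRk (M : Matroid α) (X : Set α) : (rkSet M X : ℕ∞) = M.eRk X :=
  rk_eq_eRank (M ↾ X)

lemma rkSet_le_ncard (M : Matroid α) (X : Set α) : rkSet M X ≤ X.ncard := by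
  rw [← Nat.cast_le (α := ℕ∞), rkSet_eq_eRk, X.toFinite.cast_ncard_eq]
  exact M.eRk_le_encard X

lemma rkSet_empty (M : Matroid α) : rkSet M ∅ = 0 :=
  Nat.eq_zero_of_le_zero (by simpa using rkSet_le_ncard M ∅)

lemma rkSet_closure (M : Matroid α) (X : Set α) : rkSet M (M.closure X) = rkSet M X := by
  rw [← Nat.cast_inj (R := ℕ∞), rkSet_eq_eRk, rkSet_eq_eRk, eRk_closure_eq]

lemma _root_.Matroid.Indep.rkSet_eq_ncard (hI : M.Indep I) : rkSet M I = I.ncard := by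
  rw [← Nat.cast_inj (R := ℕ∞), rkSet_eq_eRk, hI.eRk_eq_encard, I.toFinite.cast_ncard_eq]

lemma _root_.Matroid.IsCircuit.rkSet_add_one_eq (hC : M.IsCircuit C) :
    rkSet M C + 1 = C.ncard := by
  rw [← Nat.cast_inj (R := ℕ∞), Nat.cast_add, rkSet_eq_eRk, C.toFinite.cast_ncard_eq,
    Nat.cast_one, hC.eRk_add_one_eq]

lemma ModularFlats.three_le_ncard_of_rkSet_eq_two (hmod : ModularFlats M) (hc : Connected M)
    (hF : M.IsFlat F) (hF2 : rkSet M F = 2) : 3 ≤ F.ncard := by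
  by_contra! hlt
  obtain ⟨a, b, hab, rfl⟩ := ncard_eq_two.1
    (show F.ncard = 2 by have := rkSet_le_ncard M F; omega)
  obtain ⟨C, hC, haC, hbC⟩ :=
    hc.2 a b (hF.subset_ground (by simp)) (hF.subset_ground (by simp)) hab
  rw [circuit_iff_isCircuit] at hC
  have hD : M.Indep (C \ {a, b}) :=
    (hC.sdiff_singleton_indep haC).subset (sdiff_subset_sdiff_right (by simp))
  have hdisj : {a, b} ∩ M.closure (C \ {a, b}) = ∅ := by
    refine eq_empty_of_forall_notMem fun x ⟨hx, hxcl⟩ => ?_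
    rcases hx with rfl | rfl
    · exact hC.notMem_closure_sdiff_pair haC hbC hab hxcl
    · rw [pair_comm] at hxcl
      exact hC.notMem_closure_sdiff_pair hbC haC hab.symm hxcl
  have hjoin : {a, b} ∪ (C \ {a, b}) = C := union_sdiff_cancel (pair_subset haC hbC)
  have hmodular := hmod _ _ hF (M.isFlat_closure (C \ {a, b}))
  rw [hF2, rkSet_closure, closure_union_closure_right_eq, rkSet_closure, hjoin, hdisj,
    rkSet_empty, hD.rkSet_eq_ncard] at hmodular
  have hD_card := ncard_sdiff (pair_subset haC hbC)
  have hC_card := ncard_le_ncard (pair_subset haC hbC)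
  rw [ncard_pair hab] at hD_card hC_card
  have := hC.rkSet_add_one_eq
  omega

lemma Simple.isCircuit_of_dep_of_ncard_le_three (hs : Simple M) (hC : M.Dep C)
    (hC3 : C.ncard ≤ 3) : M.IsCircuit C :=
  isCircuit_iff_forall_ssubset.2 ⟨hC, fun I hIC =>
    hs I (hIC.subset.trans hC.subset_ground) (by have := ncard_lt_ncard hIC; omega)⟩

lemma Simple.connected_of_forall_three_le_ncard (hs : Simple M) (hE : M.E.Nonempty)
    (hlines : ∀ F, M.IsFlat F → rkSet M F = 2 → 3 ≤ F.ncard) : Connected M := by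
  refine ⟨hE, fun e f he hf hef => ?_⟩
  have hef_indep : M.Indep {e, f} := hs _ (pair_subset he hf) (ncard_pair hef).le
  have hline : 3 ≤ (M.closure {e, f}).ncard := hlines _ (M.isFlat_closure _) (by
    rw [rkSet_closure, hef_indep.rkSet_eq_ncard, ncard_pair hef])
  obtain ⟨c, hc_cl, hc_ef⟩ : (M.closure {e, f} \ {e, f}).Nonempty := by
    refine nonempty_of_ncard_ne_zero fun h => ?_
    have := ncard_sdiff (M.subset_closure {e, f} hef_indep.subset_ground)
    rw [ncard_pair hef] at this
    omega
  have hdep : M.Dep {c, e, f} := by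
    refine ⟨fun hind => ?_, insert_subset (mem_ground_of_mem_closure hc_cl) (pair_subset he hf)⟩
    exact ((hef_indep.insert_indep_iff_of_notMem hc_ef).1 hind).2 hc_cl
  refine ⟨{c, e, f}, circuit_iff_isCircuit.2 (hs.isCircuit_of_dep_of_ncard_le_three hdep ?_),
    by simp, by simp⟩
  exact (ncard_insert_le c {e, f}).trans (by rw [ncard_pair hef])

theorem restriction_to_rank_three_flat_general {α : Type} [Fintype α] (M : Matroid α)
    (hs : Simple M) (hc : Connected M) (hmod : ModularFlats M)
    (G : Set α) (hG : M.IsFlat G) (hG3 : rkSet M G = 3) :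
    rk (M ↾ G) = 3 ∧ Connected (M ↾ G) ∧ ModularFlats (M ↾ G) ∧
      ∀ F : Set α, (M ↾ G).IsFlat F → rkSet (M ↾ G) F = 2 → 3 ≤ F.ncard := by
  have hlines : ∀ F : Set α, (M ↾ G).IsFlat F → rkSet (M ↾ G) F = 2 → 3 ≤ F.ncard := by
    intro F hF hF2
    rw [hG.isFlat_restrict_iff] at hF
    rw [rkSet_restrict M hF.2] at hF2
    exact hmod.three_le_ncard_of_rkSet_eq_two hc hF.1 hF2
  have hG_nonempty : G.Nonempty :=
    nonempty_of_ncard_ne_zero (by have := rkSet_le_ncard M G; omega)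
  exact ⟨hG3,
    (hs.restrict hG.subset_ground).connected_of_forall_three_le_ncard hG_nonempty hlines,
    hmod.restrict hG, hlines⟩

/-- Let `M` be a simple connected matroid of rank `r ≥ 3` on a finite ground
set whose lattice of flats is modular, and let `G` be a rank-3 flat of `M`. Then the
restriction `M_G` is a connected modular matroid of rank `3` in which every rank-2 flat
contains at least `3` elements (i.e., `M_G` is a rank-3 connected projective geometry). -/
theorem restriction_to_rank_three_flat {α : Type} [Fintype α] (M : Matroid α)
    (hs : Simple M) (hc : Connected M) (hr : 3 ≤ rk M) (hmod : ModularFlats M)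
    (G : Set α) (hG : M.IsFlat G) (hG3 : rkSet M G = 3) :
    rk (M ↾ G) = 3 ∧ Connected (M ↾ G) ∧ ModularFlats (M ↾ G) ∧
      ∀ F : Set α, (M ↾ G).IsFlat F → rkSet (M ↾ G) F = 2 → 3 ≤ F.ncard :=
  restriction_to_rank_three_flat_general M hs hc hmod G hG hG3

end KL
end
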